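/- arXiv:0906.1035 — 10 statements merged into one kernel-verified Lean document; each statement's English description precedes it below -/
import Mathlib

section
/- Let a, b, c : ℝ → ℝ be positive differentiable functions satisfying the Heisenberg-group Ricci flow ODE system a' = -a²/(2bc), b' = a/(2c), c' = a/(2b). Then the products a·b and a·c are constant functions, and the ratio b/c is a constant function. -/
/-! By the product rule `(a b)' = a' b + a b' = -a²/(2c) + a²/(2c) = 0`, and likewise
`(a c)' = 0`; since `b' c = a/2 = b c'`, the quotient rule gives `(b / c)' = 0`. -/

section

variable {f g : ℝ → ℝ}

theorem mul_eq_of_deriv_mul_add_mul_deriv_eq_zero (hf : Differentiable ℝ f)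
    (hg : Differentiable ℝ g) (h : ∀ t, deriv f t * g t + f t * deriv g t = 0) (s t : ℝ) :
    f s * g s = f t * g t :=
  is_const_of_deriv_eq_zero (f := fun t => f t * g t) (hf.mul hg)
    (fun t => by rw [deriv_fun_mul (hf t) (hg t), h]) s t

theorem div_eq_of_deriv_mul_eq_mul_deriv (hf : Differentiable ℝ f) (hg : Differentiable ℝ g)
    (hg0 : ∀ t, g t ≠ 0) (h : ∀ t, deriv f t * g t = f t * deriv g t) (s t : ℝ) :
    f s / g s = f t / g t :=
  is_const_of_deriv_eq_zero (f := fun t => f t / g t) (hf.div hg hg0)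
    (fun t => by rw [deriv_fun_div (hf t) (hg t) (hg0 t), h, sub_self, zero_div]) s t

end

theorem heisenberg_conserved_general (a b c : ℝ → ℝ)
    (hbpos : ∀ t, 0 < b t) (hcpos : ∀ t, 0 < c t)
    (ha : Differentiable ℝ a) (hb : Differentiable ℝ b) (hc : Differentiable ℝ c)
    (hda : ∀ t, deriv a t = -(a t) ^ 2 / (2 * b t * c t))
    (hdb : ∀ t, deriv b t = a t / (2 * c t))
    (hdc : ∀ t, deriv c t = a t / (2 * b t)) :
    (∀ s t, a s * b s = a t * b t) ∧
    (∀ s t, a s * c s = a t * c t) ∧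
    (∀ s t, b s / c s = b t / c t) := by
  have hb0 : ∀ t, b t ≠ 0 := fun t => (hbpos t).ne'
  have hc0 : ∀ t, c t ≠ 0 := fun t => (hcpos t).ne'
  refine ⟨mul_eq_of_deriv_mul_add_mul_deriv_eq_zero ha hb fun t => ?_,
    mul_eq_of_deriv_mul_add_mul_deriv_eq_zero ha hc fun t => ?_,
    div_eq_of_deriv_mul_eq_mul_deriv hb hc hc0 fun t => ?_⟩
  · rw [hda, hdb]
    field_simp [hb0 t, hc0 t]
    ring
  · rw [hda, hdc]
    field_simp [hb0 t, hc0 t]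
    ring
  · rw [hdb, hdc]
    field_simp [hb0 t, hc0 t]

/-- Heisenberg Ricci flow: a·b, a·c and b/c are conserved. -/
theorem heisenberg_conserved (a b c : ℝ → ℝ)
    (hapos : ∀ t, 0 < a t) (hbpos : ∀ t, 0 < b t) (hcpos : ∀ t, 0 < c t)
    (ha : Differentiable ℝ a) (hb : Differentiable ℝ b) (hc : Differentiable ℝ c)
    (hda : ∀ t, deriv a t = -(a t) ^ 2 / (2 * b t * c t))
    (hdb : ∀ t, deriv b t = a t / (2 * c t))
    (hdc : ∀ t, deriv c t = a t / (2 * b t)) :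
    (∀ s t, a s * b s = a t * b t) ∧
    (∀ s t, a s * c s = a t * c t) ∧
    (∀ s t, b s / c s = b t / c t) :=
  heisenberg_conserved_general a b c hbpos hcpos ha hb hc hda hdb hdc
end

section
/- Let a₀, b₀, c₀ > 0 and define, for t > -b₀c₀/a₀ · (2/3), a(t) = a₀^{2/3} b₀^{1/3} c₀^{1/3} ((3/2)t + b₀c₀/a₀)^{-1/3}, b(t) = a₀^{1/3} b₀^{2/3} c₀^{-1/3} ((3/2)t + b₀c₀/a₀)^{1/3}, c(t) = a₀^{1/3} b₀^{-1/3} c₀^{2/3} ((3/2)t + b₀c₀/a₀)^{1/3}. Then (a,b,c) solves the system a' = -a²/(2bc), b' = a/(2c), c' = a/(2b), with a(0)=a₀, b(0)=b₀, c(0)=c₀. -/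
/-!
The three functions are `α s⁻¹, β s, γ s` with `s = ((3/2) t + b₀c₀/a₀)^{1/3}`, so `s' = 1/(2 s²)`.
Substituting this ansatz, all three equations reduce to the single coefficient relation `α = β γ`,
and the constants are chosen so that `s(0)` matches the initial data. Writing `a₀, b₀, c₀` as cubes
turns every real power in the formulas into an integer power, after which both facts are identities
of rational functions.
-/

lemma pow_three_rpow_div_three {x : ℝ} (hx : 0 ≤ x) (k : ℝ) : (x ^ 3) ^ (k / 3) = x ^ k := by
  rw [← Real.rpow_natCast_mul hx]
  congr 1
  ring

lemma exists_pos_pow_three_eq {x : ℝ} (hx : 0 < x) : ∃ y, 0 < y ∧ y ^ 3 = x :=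
  ⟨x ^ ((3 : ℕ) : ℝ)⁻¹, by positivity, Real.rpow_inv_natCast_pow hx.le three_ne_zero⟩

lemma hasDerivAt_affine_rpow {m q r t : ℝ} (h : m * t + q ≠ 0) :
    HasDerivAt (fun s => (m * s + q) ^ r) (r * m * (m * t + q) ^ r / (m * t + q)) t := by
  have hline : HasDerivAt (fun s => m * s + q) m t := by
    simpa using ((hasDerivAt_id t).const_mul m).add_const q
  convert hline.rpow_const (p := r) (Or.inl h) using 1
  rw [Real.rpow_sub_one h]
  ring

theorem hasDerivAt_heisenberg_ansatz {α β γ q t : ℝ} {a b c : ℝ → ℝ}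
    (hβ : β ≠ 0) (hγ : γ ≠ 0) (hα : α = β * γ) (ht : 0 < 3 / 2 * t + q)
    (ha : ∀ s, a s = α * (3 / 2 * s + q) ^ (-(1 : ℝ) / 3))
    (hb : ∀ s, b s = β * (3 / 2 * s + q) ^ ((1 : ℝ) / 3))
    (hc : ∀ s, c s = γ * (3 / 2 * s + q) ^ ((1 : ℝ) / 3)) :
    HasDerivAt a (-(a t) ^ 2 / (2 * b t * c t)) t ∧
      HasDerivAt b (a t / (2 * c t)) t ∧
      HasDerivAt c (a t / (2 * b t)) t := by
  obtain ⟨S, hS, hSt⟩ := exists_pos_pow_three_eq ht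
  have hS₀ := hS.ne'
  have hpow (κ r : ℝ) : HasDerivAt (fun s => κ * (3 / 2 * s + q) ^ r)
      (κ * (r * (3 / 2) * (S ^ 3) ^ r / S ^ 3)) t := by
    rw [hSt]
    exact (hasDerivAt_affine_rpow ht.ne').const_mul κ
  obtain rfl : a = _ := funext ha
  obtain rfl : b = _ := funext hb
  obtain rfl : c = _ := funext hc
  subst hα
  refine ⟨(hpow _ _).congr_deriv ?_, (hpow _ _).congr_deriv ?_, (hpow _ _).congr_deriv ?_⟩ <;>
    simp only [← hSt, pow_three_rpow_div_three hS.le, Real.rpow_neg_one, Real.rpow_one] <;>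
    field_simp

/-- Explicit solution of the Heisenberg Ricci flow ODE. -/
theorem heisenberg_explicit_solution (a₀ b₀ c₀ : ℝ)
    (ha₀ : 0 < a₀) (hb₀ : 0 < b₀) (hc₀ : 0 < c₀)
    (a b c : ℝ → ℝ)
    (hadef : ∀ t, a t = a₀ ^ ((2:ℝ)/3) * b₀ ^ ((1:ℝ)/3) * c₀ ^ ((1:ℝ)/3) *
      ((3/2) * t + b₀ * c₀ / a₀) ^ (-(1:ℝ)/3))
    (hbdef : ∀ t, b t = a₀ ^ ((1:ℝ)/3) * b₀ ^ ((2:ℝ)/3) * c₀ ^ (-(1:ℝ)/3) *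
      ((3/2) * t + b₀ * c₀ / a₀) ^ ((1:ℝ)/3))
    (hcdef : ∀ t, c t = a₀ ^ ((1:ℝ)/3) * b₀ ^ (-(1:ℝ)/3) * c₀ ^ ((2:ℝ)/3) *
      ((3/2) * t + b₀ * c₀ / a₀) ^ ((1:ℝ)/3)) :
    (a 0 = a₀ ∧ b 0 = b₀ ∧ c 0 = c₀) ∧
    ∀ t, -(2/3) * (b₀ * c₀ / a₀) < t →
      HasDerivAt a (-(a t) ^ 2 / (2 * b t * c t)) t ∧
      HasDerivAt b (a t / (2 * c t)) t ∧
      HasDerivAt c (a t / (2 * b t)) t := by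
  obtain ⟨A, hA, rfl⟩ := exists_pos_pow_three_eq ha₀
  obtain ⟨B, hB, rfl⟩ := exists_pos_pow_three_eq hb₀
  obtain ⟨C, hC, rfl⟩ := exists_pos_pow_three_eq hc₀
  have hq : B ^ 3 * C ^ 3 / A ^ 3 = (B * C / A) ^ 3 := by ring
  constructor
  · simp only [hadef, hbdef, hcdef, mul_zero, zero_add, hq]
    simp only [pow_three_rpow_div_three, hA.le, hB.le, hC.le, (by positivity : 0 ≤ B * C / A),
      Real.rpow_two, Real.rpow_neg_one, Real.rpow_one]
    refine ⟨?_, ?_, ?_⟩ <;> field_simp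
  · intro t ht
    refine hasDerivAt_heisenberg_ansatz (by positivity) (by positivity) ?_ (by linarith)
      hadef hbdef hcdef
    simp only [pow_three_rpow_div_three, hA.le, hB.le, hC.le, Real.rpow_two, Real.rpow_neg_one,
      Real.rpow_one]
    field_simp
end

section
/- Let a, b, c : ℝ → ℝ be positive functions satisfying the Heisenberg Ricci flow ODE a' = -a²/(2bc), b' = a/(2c), c' = a/(2b). Then the following four 'Ricci-flatness' identities hold: a''/a + b''/b + c''/c = 0; a·(a'bc)'/(bc) = a⁴/(2b²c²); b·(b'ca)'/(ca) = -a²/(2c²); and c·(c'ab)'/(ab) = -a²/(2b²). -/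
/-!
Along the flow `a' b c = -a²/2` and `b' c a = c' a b = a²/2`, so the last three identities only
require differentiating `a²/2`. For the first, put `p = a/(2bc)`: the logarithmic derivatives of
`a, b, c` are `-p, p, p`, hence `p' = -3p²`, and therefore `a'' = 4ap²`, `b'' = -2bp²`,
`c'' = -2cp²`, whose ratios to `a, b, c` sum to zero.
-/

structure HeisenbergFlow (a b c : ℝ → ℝ) : Prop where
  deriv_a : ∀ t, deriv a t = -(a t) ^ 2 / (2 * b t * c t)
  deriv_b : ∀ t, deriv b t = a t / (2 * c t)
  deriv_c : ∀ t, deriv c t = a t / (2 * b t)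

theorem hasDerivAt_sq_div_two {f : ℝ → ℝ} {t : ℝ} (hf : DifferentiableAt ℝ f t) :
    HasDerivAt (fun s => f s ^ 2 / 2) (f t * deriv f t) t :=
  ((hf.hasDerivAt.pow 2).div_const 2).congr_deriv (by ring)

namespace HeisenbergFlow

variable {a b c : ℝ → ℝ} {t : ℝ}

theorem deriv_a_mul_mul (h : HeisenbergFlow a b c) (hb : ∀ s, b s ≠ 0) (hc : ∀ s, c s ≠ 0) :
    (fun s => deriv a s * b s * c s) = fun s => -(a s ^ 2 / 2) := by
  funext s
  rw [h.deriv_a s]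
  field_simp [hb s, hc s]

theorem deriv_b_mul_mul (h : HeisenbergFlow a b c) (hc : ∀ s, c s ≠ 0) :
    (fun s => deriv b s * c s * a s) = fun s => a s ^ 2 / 2 := by
  funext s
  rw [h.deriv_b s]
  field_simp [hc s]

theorem deriv_c_mul_mul (h : HeisenbergFlow a b c) (hb : ∀ s, b s ≠ 0) :
    (fun s => deriv c s * a s * b s) = fun s => a s ^ 2 / 2 := by
  funext s
  rw [h.deriv_c s]
  field_simp [hb s]

theorem hasDerivAt_deriv_a (h : HeisenbergFlow a b c) (ha : DifferentiableAt ℝ a t)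
    (hb : DifferentiableAt ℝ b t) (hc : DifferentiableAt ℝ c t) (hb₀ : b t ≠ 0) (hc₀ : c t ≠ 0) :
    HasDerivAt (deriv a) (a t ^ 3 / (b t ^ 2 * c t ^ 2)) t := by
  rw [funext h.deriv_a]
  refine ((ha.hasDerivAt.pow 2).neg.div ((hb.hasDerivAt.const_mul 2).mul hc.hasDerivAt)
    (by simp [hb₀, hc₀])).congr_deriv ?_
  simp only [Pi.neg_apply, Pi.pow_apply, Pi.mul_apply]
  rw [h.deriv_a, h.deriv_b, h.deriv_c]
  field_simp
  ring

theorem hasDerivAt_deriv_b (h : HeisenbergFlow a b c) (ha : DifferentiableAt ℝ a t)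
    (hc : DifferentiableAt ℝ c t) (hb₀ : b t ≠ 0) (hc₀ : c t ≠ 0) :
    HasDerivAt (deriv b) (-(a t ^ 2 / (2 * b t * c t ^ 2))) t := by
  rw [funext h.deriv_b]
  refine (ha.hasDerivAt.div (hc.hasDerivAt.const_mul 2) (by simp [hc₀])).congr_deriv ?_
  rw [h.deriv_a, h.deriv_c]
  field_simp
  ring

theorem hasDerivAt_deriv_c (h : HeisenbergFlow a b c) (ha : DifferentiableAt ℝ a t)
    (hb : DifferentiableAt ℝ b t) (hb₀ : b t ≠ 0) (hc₀ : c t ≠ 0) :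
    HasDerivAt (deriv c) (-(a t ^ 2 / (2 * b t ^ 2 * c t))) t := by
  rw [funext h.deriv_c]
  refine (ha.hasDerivAt.div (hb.hasDerivAt.const_mul 2) (by simp [hb₀])).congr_deriv ?_
  rw [h.deriv_a, h.deriv_b]
  field_simp
  ring

end HeisenbergFlow

/-- Ricci-flatness identities for the cohomogeneity-one metric over the Heisenberg group. -/
theorem heisenberg_ricci_flat_identities (a b c : ℝ → ℝ)
    (hapos : ∀ t, 0 < a t) (hbpos : ∀ t, 0 < b t) (hcpos : ∀ t, 0 < c t)
    (ha : Differentiable ℝ a) (hb : Differentiable ℝ b) (hc : Differentiable ℝ c)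
    (hda : ∀ t, deriv a t = -(a t) ^ 2 / (2 * b t * c t))
    (hdb : ∀ t, deriv b t = a t / (2 * c t))
    (hdc : ∀ t, deriv c t = a t / (2 * b t)) :
    ∀ t, deriv (deriv a) t / a t + deriv (deriv b) t / b t + deriv (deriv c) t / c t = 0 ∧
      a t * deriv (fun s => deriv a s * b s * c s) t / (b t * c t) =
        (a t) ^ 4 / (2 * (b t) ^ 2 * (c t) ^ 2) ∧
      b t * deriv (fun s => deriv b s * c s * a s) t / (c t * a t) =
        -(a t) ^ 2 / (2 * (c t) ^ 2) ∧
      c t * deriv (fun s => deriv c s * a s * b s) t / (a t * b t) =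
        -(a t) ^ 2 / (2 * (b t) ^ 2) := by
  intro t
  have h : HeisenbergFlow a b c := ⟨hda, hdb, hdc⟩
  have hb₀ : ∀ s, b s ≠ 0 := fun s => (hbpos s).ne'
  have hc₀ : ∀ s, c s ≠ 0 := fun s => (hcpos s).ne'
  have ha₀ : a t ≠ 0 := (hapos t).ne'
  have hsq := hasDerivAt_sq_div_two (ha t)
  rw [(h.hasDerivAt_deriv_a (ha t) (hb t) (hc t) (hb₀ t) (hc₀ t)).deriv,
    (h.hasDerivAt_deriv_b (ha t) (hc t) (hb₀ t) (hc₀ t)).deriv,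
    (h.hasDerivAt_deriv_c (ha t) (hb t) (hb₀ t) (hc₀ t)).deriv, h.deriv_a_mul_mul hb₀ hc₀,
    h.deriv_b_mul_mul hc₀, h.deriv_c_mul_mul hb₀, deriv.fun_neg, hsq.deriv, hda]
  refine ⟨by field_simp [hb₀ t, hc₀ t]; ring, ?_, ?_, ?_⟩ <;> field_simp [hb₀ t, hc₀ t]
end

section
/- Let a, b, c : ℝ → ℝ be positive differentiable functions satisfying the E(2) Ricci flow ODE a' = (c² - a²)/(2bc), b' = (c - a)²/(2ca), c' = (a² - c²)/(2ab). Then a·c and b·(c + a) are constant functions. -/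
/-!
Along the flow `(a c)' = a' c + a c'` vanishes because `a' c = -a c' = (c² - a²)/(2b)`, and
`(b (c + a))' = b' (c + a) + b (c' + a')` vanishes because `b (c' + a') = -(c - a)² (c + a)/(2ca)`.
-/

lemma e2_flow_deriv_mul_ac {a b c : ℝ} (ha : a ≠ 0) (hc : c ≠ 0) :
    (c ^ 2 - a ^ 2) / (2 * b * c) * c + a * ((a ^ 2 - c ^ 2) / (2 * a * b)) = 0 := by
  field_simp
  ring

lemma e2_flow_deriv_mul_b_add {a b c : ℝ} (ha : a ≠ 0) (hb : b ≠ 0) (hc : c ≠ 0) :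
    (c - a) ^ 2 / (2 * c * a) * (c + a) +
      b * ((a ^ 2 - c ^ 2) / (2 * a * b) + (c ^ 2 - a ^ 2) / (2 * b * c)) = 0 := by
  field_simp
  ring

/-- E(2) Ricci flow: a·c and b·(c+a) are conserved. -/
theorem e2_conserved (a b c : ℝ → ℝ)
    (hapos : ∀ t, 0 < a t) (hbpos : ∀ t, 0 < b t) (hcpos : ∀ t, 0 < c t)
    (ha : Differentiable ℝ a) (hb : Differentiable ℝ b) (hc : Differentiable ℝ c)
    (hda : ∀ t, deriv a t = ((c t) ^ 2 - (a t) ^ 2) / (2 * b t * c t))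
    (hdb : ∀ t, deriv b t = (c t - a t) ^ 2 / (2 * c t * a t))
    (hdc : ∀ t, deriv c t = ((a t) ^ 2 - (c t) ^ 2) / (2 * a t * b t)) :
    (∀ s t, a s * c s = a t * c t) ∧
    (∀ s t, b s * (c s + a s) = b t * (c t + a t)) := by
  constructor
  · refine is_const_of_deriv_eq_zero (f := fun t => a t * c t) (ha.mul hc) fun t => ?_
    rw [deriv_fun_mul (ha t) (hc t), hda, hdc]
    exact e2_flow_deriv_mul_ac (hapos t).ne' (hcpos t).ne'
  · refine is_const_of_deriv_eq_zero (f := fun t => b t * (c t + a t))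
      (hb.mul (hc.add ha)) fun t => ?_
    rw [deriv_fun_mul (hb t) ((hc t).fun_add (ha t)), deriv_fun_add (hc t) (ha t), hda, hdb, hdc]
    exact e2_flow_deriv_mul_b_add (hapos t).ne' (hbpos t).ne' (hcpos t).ne'
end

section
/- Let a, b, c be positive functions satisfying the E(2) Ricci flow ODE a' = (c² - a²)/(2bc), b' = (c - a)²/(2ca), c' = (a² - c²)/(2ab), and set k = a/c. Then b' = (1 - k)²/(2k), k' = (1 - k²)/b, and b = l₀·√k/(1 + k) where l₀ = b(0)·(1 + k(0))/√(k(0)). -/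
/-! Along the flow the ratio `k = a / c` satisfies `k' = (1 - k²) / b`, and rewriting `b'` in terms
of `k` shows that `b (1 + k) / √k` has zero derivative: the logarithmic derivatives of `b`,
`1 + k` and `√k` are `(1 - k)² / (2kb)`, `(1 - k) / b` and `(1 - k²) / (2kb)`, and the first
two sum to the third. Hence `b (1 + k) / √k` equals its value `l₀` at time `0`. -/

open Real

lemma sq_sub_div_two_mul_mul_eq {a c : ℝ} (hc : c ≠ 0) :
    (c - a) ^ 2 / (2 * c * a) = (1 - a / c) ^ 2 / (2 * (a / c)) := by
  field_simp

lemma hasDerivAt_div_of_e2_flow {a b c : ℝ → ℝ} {t : ℝ}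
    (ha : HasDerivAt a ((c t ^ 2 - a t ^ 2) / (2 * b t * c t)) t)
    (hc : HasDerivAt c ((a t ^ 2 - c t ^ 2) / (2 * a t * b t)) t)
    (ha0 : a t ≠ 0) (hb0 : b t ≠ 0) (hc0 : c t ≠ 0) :
    HasDerivAt (fun s => a s / c s) ((1 - (a t / c t) ^ 2) / b t) t := by
  refine (ha.div hc hc0).congr_deriv ?_
  field_simp
  ring

lemma hasDerivAt_mul_one_add_div_sqrt_eq_zero {b k : ℝ → ℝ} {t : ℝ} (hk : 0 < k t)
    (hb0 : b t ≠ 0) (hb : HasDerivAt b ((1 - k t) ^ 2 / (2 * k t)) t)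
    (hk' : HasDerivAt k ((1 - k t ^ 2) / b t) t) :
    HasDerivAt (fun s => b s * (1 + k s) / √(k s)) 0 t := by
  have hsqrt : HasDerivAt (fun s => √(k s)) ((1 - k t ^ 2) / b t / (2 * √(k t))) t :=
    hk'.sqrt hk.ne'
  have hs0 : √(k t) ≠ 0 := (sqrt_pos.2 hk).ne'
  refine ((hb.mul ((hasDerivAt_const t 1).add hk')).div hsqrt hs0).congr_deriv ?_
  have hk_sq : k t = √(k t) ^ 2 := (sq_sqrt hk.le).symm
  simp only [Pi.mul_apply, Pi.add_apply]
  generalize √(k t) = r at hk_sq hs0 ⊢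
  rw [hk_sq]
  field_simp
  ring

lemma eq_mul_sqrt_div_one_add_of_e2 {b k : ℝ → ℝ} (hk : ∀ t, 0 < k t) (hb0 : ∀ t, b t ≠ 0)
    (hb : ∀ t, HasDerivAt b ((1 - k t) ^ 2 / (2 * k t)) t)
    (hk' : ∀ t, HasDerivAt k ((1 - k t ^ 2) / b t) t) (t : ℝ) :
    b t = b 0 * (1 + k 0) / √(k 0) * √(k t) / (1 + k t) := by
  have hF t := hasDerivAt_mul_one_add_div_sqrt_eq_zero (hk t) (hb0 t) (hb t) (hk' t)
  have hconst := is_const_of_deriv_eq_zero (fun s => (hF s).differentiableAt)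
    (fun s => (hF s).deriv) t 0
  rw [← hconst]
  have hs0 : √(k t) ≠ 0 := (sqrt_pos.2 (hk t)).ne'
  have h1k : 1 + k t ≠ 0 := by linarith [hk t]
  field_simp

/-- E(2) Ricci flow in terms of k = a/c, and the formula b = l₀ √k/(1+k). -/
theorem e2_k_equations (a b c : ℝ → ℝ)
    (hapos : ∀ t, 0 < a t) (hbpos : ∀ t, 0 < b t) (hcpos : ∀ t, 0 < c t)
    (ha : Differentiable ℝ a) (hb : Differentiable ℝ b) (hc : Differentiable ℝ c)
    (hda : ∀ t, deriv a t = ((c t) ^ 2 - (a t) ^ 2) / (2 * b t * c t))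
    (hdb : ∀ t, deriv b t = (c t - a t) ^ 2 / (2 * c t * a t))
    (hdc : ∀ t, deriv c t = ((a t) ^ 2 - (c t) ^ 2) / (2 * a t * b t)) :
    ∀ t, deriv b t = (1 - a t / c t) ^ 2 / (2 * (a t / c t)) ∧
      deriv (fun s => a s / c s) t = (1 - (a t / c t) ^ 2) / b t ∧
      b t = (b 0 * (1 + a 0 / c 0) / Real.sqrt (a 0 / c 0)) *
        Real.sqrt (a t / c t) / (1 + a t / c t) := by
  have hdb' t : HasDerivAt b ((1 - a t / c t) ^ 2 / (2 * (a t / c t))) t := by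
    rw [← sq_sub_div_two_mul_mul_eq (hcpos t).ne', ← hdb]
    exact (hb t).hasDerivAt
  have hdk t : HasDerivAt (fun s => a s / c s) ((1 - (a t / c t) ^ 2) / b t) t := by
    refine hasDerivAt_div_of_e2_flow ?_ ?_ (hapos t).ne' (hbpos t).ne' (hcpos t).ne'
    · exact hda t ▸ (ha t).hasDerivAt
    · exact hdc t ▸ (hc t).hasDerivAt
  intro t
  exact ⟨(hdb' t).deriv, (hdk t).deriv, eq_mul_sqrt_div_one_add_of_e2 (k := fun s => a s / c s)
    (fun s => div_pos (hapos s) (hcpos s)) (fun s => (hbpos s).ne') hdb' hdk t⟩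
end

section
/- Let a, b, c : ℝ → ℝ be positive functions satisfying the E(2) Ricci flow ODE a' = (c² - a²)/(2bc), b' = (a - c)²/(2ac), c' = (a² - c²)/(2ab). Then the following identities hold: a''/a + b''/b + c''/c = 0; -a(a'bc)'/(bc) + (a⁴ - c⁴)/(2b²c²) = 0; -b(b'ca)'/(ca) - (a² - c²)²/(2a²c²) = 0; and -c(c'ab)'/(ab) + (c⁴ - a⁴)/(2a²b²) = 0. -/
set_option maxHeartbeats 4000000 in
/-- Ricci-flatness identities for the Riemannian cohomogeneity-one metric over E(2). -/
theorem e2_ricci_flat_identities (a b c : ℝ → ℝ)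
    (hapos : ∀ t, 0 < a t) (hbpos : ∀ t, 0 < b t) (hcpos : ∀ t, 0 < c t)
    (ha : Differentiable ℝ a) (hb : Differentiable ℝ b) (hc : Differentiable ℝ c)
    (hda : ∀ t, deriv a t = ((c t) ^ 2 - (a t) ^ 2) / (2 * b t * c t))
    (hdb : ∀ t, deriv b t = (a t - c t) ^ 2 / (2 * a t * c t))
    (hdc : ∀ t, deriv c t = ((a t) ^ 2 - (c t) ^ 2) / (2 * a t * b t)) :
    ∀ t, deriv (deriv a) t / a t + deriv (deriv b) t / b t + deriv (deriv c) t / c t = 0 ∧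
      -(a t * deriv (fun s => deriv a s * b s * c s) t / (b t * c t)) +
        ((a t) ^ 4 - (c t) ^ 4) / (2 * (b t) ^ 2 * (c t) ^ 2) = 0 ∧
      -(b t * deriv (fun s => deriv b s * c s * a s) t / (c t * a t)) -
        ((a t) ^ 2 - (c t) ^ 2) ^ 2 / (2 * (a t) ^ 2 * (c t) ^ 2) = 0 ∧
      -(c t * deriv (fun s => deriv c s * a s * b s) t / (a t * b t)) +
        ((c t) ^ 4 - (a t) ^ 4) / (2 * (a t) ^ 2 * (b t) ^ 2) = 0 := by
  have hane : ∀ t, a t ≠ 0 := fun t => (hapos t).ne'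
  have hbne : ∀ t, b t ≠ 0 := fun t => (hbpos t).ne'
  have hcne : ∀ t, c t ≠ 0 := fun t => (hcpos t).ne'
  have hbc : ∀ t, (2 : ℝ) * b t * c t ≠ 0 := fun t =>
    mul_ne_zero (mul_ne_zero two_ne_zero (hbne t)) (hcne t)
  have hac : ∀ t, (2 : ℝ) * a t * c t ≠ 0 := fun t =>
    mul_ne_zero (mul_ne_zero two_ne_zero (hane t)) (hcne t)
  have hab : ∀ t, (2 : ℝ) * a t * b t ≠ 0 := fun t =>
    mul_ne_zero (mul_ne_zero two_ne_zero (hane t)) (hbne t)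
  intro t
  have hA : HasDerivAt a (deriv a t) t := (ha t).hasDerivAt
  have hB : HasDerivAt b (deriv b t) t := (hb t).hasDerivAt
  have hC : HasDerivAt c (deriv c t) t := (hc t).hasDerivAt
  have hea : deriv a = fun s => ((c s) ^ 2 - (a s) ^ 2) / (2 * b s * c s) := funext hda
  have heb : deriv b = fun s => (a s - c s) ^ 2 / (2 * a s * c s) := funext hdb
  have hec : deriv c = fun s => ((a s) ^ 2 - (c s) ^ 2) / (2 * a s * b s) := funext hdc
  have hnum_a : HasDerivAt (fun s => (c s) ^ 2 - (a s) ^ 2)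
      ((2 : ℕ) * c t ^ 1 * deriv c t - (2 : ℕ) * a t ^ 1 * deriv a t) t :=
    (hC.pow 2).sub (hA.pow 2)
  have hnum_b : HasDerivAt (fun s => (a s - c s) ^ 2)
      ((2 : ℕ) * (a t - c t) ^ 1 * (deriv a t - deriv c t)) t := (hA.sub hC).pow 2
  have hnum_c : HasDerivAt (fun s => (a s) ^ 2 - (c s) ^ 2)
      ((2 : ℕ) * a t ^ 1 * deriv a t - (2 : ℕ) * c t ^ 1 * deriv c t) t :=
    (hA.pow 2).sub (hC.pow 2)
  have hden_bc : HasDerivAt (fun s => 2 * b s * c s)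
      (2 * deriv b t * c t + 2 * b t * deriv c t) t := (hB.const_mul 2).mul hC
  have hden_ac : HasDerivAt (fun s => 2 * a s * c s)
      (2 * deriv a t * c t + 2 * a t * deriv c t) t := (hA.const_mul 2).mul hC
  have hden_ab : HasDerivAt (fun s => 2 * a s * b s)
      (2 * deriv a t * b t + 2 * a t * deriv b t) t := (hA.const_mul 2).mul hB
  have hA2 : deriv (deriv a) t =
      (((2 : ℕ) * c t ^ 1 * deriv c t - (2 : ℕ) * a t ^ 1 * deriv a t) * (2 * b t * c t)
        - ((c t) ^ 2 - (a t) ^ 2) * (2 * deriv b t * c t + 2 * b t * deriv c t))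
        / (2 * b t * c t) ^ 2 := by
    conv_lhs => rw [hea]
    exact (hnum_a.div hden_bc (hbc t)).deriv
  have hB2 : deriv (deriv b) t =
      (((2 : ℕ) * (a t - c t) ^ 1 * (deriv a t - deriv c t)) * (2 * a t * c t)
        - (a t - c t) ^ 2 * (2 * deriv a t * c t + 2 * a t * deriv c t))
        / (2 * a t * c t) ^ 2 := by
    conv_lhs => rw [heb]
    exact (hnum_b.div hden_ac (hac t)).deriv
  have hC2 : deriv (deriv c) t =
      (((2 : ℕ) * a t ^ 1 * deriv a t - (2 : ℕ) * c t ^ 1 * deriv c t) * (2 * a t * b t)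
        - ((a t) ^ 2 - (c t) ^ 2) * (2 * deriv a t * b t + 2 * a t * deriv b t))
        / (2 * a t * b t) ^ 2 := by
    conv_lhs => rw [hec]
    exact (hnum_c.div hden_ab (hab t)).deriv
  have hP1 : (fun s => deriv a s * b s * c s) = fun s => ((c s) ^ 2 - (a s) ^ 2) / 2 := by
    funext s
    rw [hda s, div_mul_eq_mul_div, div_mul_eq_mul_div, div_eq_div_iff (hbc s) two_ne_zero]
    ring
  have hP2 : (fun s => deriv b s * c s * a s) = fun s => (a s - c s) ^ 2 / 2 := by
    funext s
    rw [hdb s, div_mul_eq_mul_div, div_mul_eq_mul_div, div_eq_div_iff (hac s) two_ne_zero]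
    ring
  have hP3 : (fun s => deriv c s * a s * b s) = fun s => ((a s) ^ 2 - (c s) ^ 2) / 2 := by
    funext s
    rw [hdc s, div_mul_eq_mul_div, div_mul_eq_mul_div, div_eq_div_iff (hab s) two_ne_zero]
    ring
  have hD1 : deriv (fun s => deriv a s * b s * c s) t
      = ((2 : ℕ) * c t ^ 1 * deriv c t - (2 : ℕ) * a t ^ 1 * deriv a t) / 2 := by
    rw [hP1]; exact (hnum_a.div_const 2).deriv
  have hD2 : deriv (fun s => deriv b s * c s * a s) t
      = ((2 : ℕ) * (a t - c t) ^ 1 * (deriv a t - deriv c t)) / 2 := by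
    rw [hP2]; exact (hnum_b.div_const 2).deriv
  have hD3 : deriv (fun s => deriv c s * a s * b s) t
      = ((2 : ℕ) * a t ^ 1 * deriv a t - (2 : ℕ) * c t ^ 1 * deriv c t) / 2 := by
    rw [hP3]; exact (hnum_c.div_const 2).deriv
  have h1 : a t ≠ 0 := hane t
  have h2 : b t ≠ 0 := hbne t
  have h3 : c t ≠ 0 := hcne t
  refine ⟨?_, ?_, ?_, ?_⟩
  · rw [hA2, hB2, hC2, hda t, hdb t, hdc t]
    push_cast
    simp only [pow_one]
    field_simp
    ring
  · rw [hD1, hda t, hdc t]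
    push_cast
    simp only [pow_one]
    field_simp
    ring
  · rw [hD2, hda t, hdc t]
    push_cast
    simp only [pow_one]
    field_simp
    ring
  · rw [hD3, hda t, hdc t]
    push_cast
    simp only [pow_one]
    field_simp
    ring
end

section
/- Let a, b, c : ℝ → ℝ be positive differentiable functions. Then the system a'c + ac' = 0, a'b + ab' = c - a, b'c + bc' = a - c holds if and only if a' = (c² - a²)/(2bc), b' = (a - c)²/(2ac), c' = (a² - c²)/(2ab). -/
/-- Closedness of the Kähler forms over E(2) is equivalent to the E(2) Ricci flow ODE. -/
theorem e2_hyperkahler_iff_ricci_flow (a b c : ℝ → ℝ)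
    (hapos : ∀ t, 0 < a t) (hbpos : ∀ t, 0 < b t) (hcpos : ∀ t, 0 < c t)
    (ha : Differentiable ℝ a) (hb : Differentiable ℝ b) (hc : Differentiable ℝ c) :
    (∀ t, deriv a t * c t + a t * deriv c t = 0 ∧
      deriv a t * b t + a t * deriv b t = c t - a t ∧
      deriv b t * c t + b t * deriv c t = a t - c t) ↔
    (∀ t, deriv a t = ((c t) ^ 2 - (a t) ^ 2) / (2 * b t * c t) ∧
      deriv b t = (a t - c t) ^ 2 / (2 * a t * c t) ∧
      deriv c t = ((a t) ^ 2 - (c t) ^ 2) / (2 * a t * b t)) := by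
  constructor
  · intro h t
    obtain ⟨h1, h2, h3⟩ := h t
    have ha0 := (hapos t).ne'
    have hb0 := (hbpos t).ne'
    have hc0 := (hcpos t).ne'
    refine ⟨?_, ?_, ?_⟩
    · field_simp
      linear_combination (c t) * h2 - (a t) * h3 + (b t) * h1
    · field_simp
      linear_combination (c t) * h2 + (a t) * h3 - (b t) * h1
    · field_simp
      linear_combination (b t) * h1 - (c t) * h2 + (a t) * h3
  · intro h t
    obtain ⟨h1, h2, h3⟩ := h t
    have ha0 := (hapos t).ne'
    have hb0 := (hbpos t).ne'
    have hc0 := (hcpos t).ne'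
    rw [h1, h2, h3]
    refine ⟨by field_simp; ring, by field_simp; ring, by field_simp; ring⟩
end

section
/- Let a, b, c : ℝ → ℝ be positive functions satisfying the SU(2) Ricci flow ODE a' = ((b - c)² - a²)/(2bc), b' = ((c - a)² - b²)/(2ca), c' = ((a - b)² - c²)/(2ab). Then the following identities hold: a''/a + b''/b + c''/c = 0; a(a'bc)'/(bc) + ((b² - c²)² - a⁴)/(2b²c²) = 0; b(b'ca)'/(ca) + ((a² - c²)² - b⁴)/(2a²c²) = 0; and -c(c'ab)'/(ab) - ((a² - b²)² - c⁴)/(2a²b²) = 0. -/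
/-!
The flow equation for `a` says exactly that `a' b c = ((b - c)² - a²) / 2`, so `(a' b c)'` and,
by the quotient rule, `a''` are rational in `a, b, c` and their first derivatives. Substituting
the flow once more for those first derivatives turns each of the four identities into a rational
identity in `a, b, c`, checked by clearing denominators. The flow is invariant under cyclic
permutation of `(a, b, c)`, so the derivative formulas need only be proved for `a`.
-/

section SU2Flow

variable {a b c : ℝ → ℝ}

lemma hasDerivAt_sub_sq_sub_sq {t : ℝ} (ha : DifferentiableAt ℝ a t)
    (hb : DifferentiableAt ℝ b t) (hc : DifferentiableAt ℝ c t) :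
    HasDerivAt (fun s => (b s - c s) ^ 2 - a s ^ 2)
      (2 * (b t - c t) * (deriv b t - deriv c t) - 2 * a t * deriv a t) t := by
  refine (((hb.hasDerivAt.fun_sub hc.hasDerivAt).fun_pow 2).fun_sub
    (ha.hasDerivAt.fun_pow 2)).congr_deriv ?_
  push_cast
  ring

lemma deriv_mul_mul_eq_of_flow (hb0 : ∀ s, b s ≠ 0) (hc0 : ∀ s, c s ≠ 0)
    (hda : ∀ s, deriv a s = ((b s - c s) ^ 2 - a s ^ 2) / (2 * b s * c s)) :
    (fun s => deriv a s * b s * c s) = fun s => ((b s - c s) ^ 2 - a s ^ 2) / 2 := by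
  funext s
  have := hb0 s
  have := hc0 s
  rw [hda s]
  field_simp

lemma deriv_deriv_mul_mul_of_flow (ha : Differentiable ℝ a) (hb : Differentiable ℝ b)
    (hc : Differentiable ℝ c) (hb0 : ∀ s, b s ≠ 0) (hc0 : ∀ s, c s ≠ 0)
    (hda : ∀ s, deriv a s = ((b s - c s) ^ 2 - a s ^ 2) / (2 * b s * c s)) (t : ℝ) :
    deriv (fun s => deriv a s * b s * c s) t =
      (b t - c t) * (deriv b t - deriv c t) - a t * deriv a t := by
  rw [deriv_mul_mul_eq_of_flow hb0 hc0 hda]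
  refine (((hasDerivAt_sub_sq_sub_sq (ha t) (hb t) (hc t)).div_const 2).congr_deriv ?_).deriv
  ring

lemma deriv_deriv_of_flow (ha : Differentiable ℝ a) (hb : Differentiable ℝ b)
    (hc : Differentiable ℝ c) (hb0 : ∀ s, b s ≠ 0) (hc0 : ∀ s, c s ≠ 0)
    (hda : ∀ s, deriv a s = ((b s - c s) ^ 2 - a s ^ 2) / (2 * b s * c s)) (t : ℝ) :
    deriv (deriv a) t =
      ((2 * (b t - c t) * (deriv b t - deriv c t) - 2 * a t * deriv a t) * (2 * b t * c t)
        - ((b t - c t) ^ 2 - a t ^ 2) * (2 * deriv b t * c t + 2 * b t * deriv c t))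
        / (2 * b t * c t) ^ 2 := by
  have hden : HasDerivAt (fun s => 2 * b s * c s)
      (2 * deriv b t * c t + 2 * b t * deriv c t) t :=
    ((hb t).hasDerivAt.const_mul 2).fun_mul (hc t).hasDerivAt
  have hne : 2 * b t * c t ≠ 0 := by simp [hb0 t, hc0 t]
  have h := (hasDerivAt_sub_sq_sub_sq (ha t) (hb t) (hc t)).fun_div hden hne
  rw [← funext hda] at h
  exact h.deriv

end SU2Flow

/-- Ricci-flatness identities for the signature-(2,2) metric over SL(2,ℝ) when
(a,b,c) solves the SU(2) Ricci flow. -/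
theorem su2_flow_sl2_ricci_flat (a b c : ℝ → ℝ)
    (hapos : ∀ t, 0 < a t) (hbpos : ∀ t, 0 < b t) (hcpos : ∀ t, 0 < c t)
    (ha : Differentiable ℝ a) (hb : Differentiable ℝ b) (hc : Differentiable ℝ c)
    (hda : ∀ t, deriv a t = ((b t - c t) ^ 2 - (a t) ^ 2) / (2 * b t * c t))
    (hdb : ∀ t, deriv b t = ((c t - a t) ^ 2 - (b t) ^ 2) / (2 * c t * a t))
    (hdc : ∀ t, deriv c t = ((a t - b t) ^ 2 - (c t) ^ 2) / (2 * a t * b t)) :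
    ∀ t, deriv (deriv a) t / a t + deriv (deriv b) t / b t + deriv (deriv c) t / c t = 0 ∧
      a t * deriv (fun s => deriv a s * b s * c s) t / (b t * c t) +
        (((b t) ^ 2 - (c t) ^ 2) ^ 2 - (a t) ^ 4) / (2 * (b t) ^ 2 * (c t) ^ 2) = 0 ∧
      b t * deriv (fun s => deriv b s * c s * a s) t / (c t * a t) +
        (((a t) ^ 2 - (c t) ^ 2) ^ 2 - (b t) ^ 4) / (2 * (a t) ^ 2 * (c t) ^ 2) = 0 ∧
      -(c t * deriv (fun s => deriv c s * a s * b s) t / (a t * b t)) -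
        (((a t) ^ 2 - (b t) ^ 2) ^ 2 - (c t) ^ 4) / (2 * (a t) ^ 2 * (b t) ^ 2) = 0 := by
  intro t
  have ha0 : ∀ s, a s ≠ 0 := fun s => (hapos s).ne'
  have hb0 : ∀ s, b s ≠ 0 := fun s => (hbpos s).ne'
  have hc0 : ∀ s, c s ≠ 0 := fun s => (hcpos s).ne'
  have := ha0 t
  have := hb0 t
  have := hc0 t
  rw [deriv_deriv_of_flow ha hb hc hb0 hc0 hda, deriv_deriv_of_flow hb hc ha hc0 ha0 hdb,
    deriv_deriv_of_flow hc ha hb ha0 hb0 hdc, deriv_deriv_mul_mul_of_flow ha hb hc hb0 hc0 hda,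
    deriv_deriv_mul_mul_of_flow hb hc ha hc0 ha0 hdb,
    deriv_deriv_mul_mul_of_flow hc ha hb ha0 hb0 hdc, hda t, hdb t, hdc t]
  refine ⟨?_, ?_, ?_, ?_⟩ <;> field_simp <;> ring
end

section
/- For m > 0 and r > m, the functions a(r) = b(r) = √(r² - m²) and c(r) = 2m√((r - m)/(r + m)), reparametrized by dt = √((r+m)/(r-m)) dr, satisfy da/dt = (a² - (b - c)²)/(bc)·(1/2), db/dt = (b² - (c - a)²)/(ca)·(1/2), dc/dt = (c² - (a - b)²)/(ab)·(1/2). -/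
/-- The Taub-NUT coefficients satisfy the SU(2) backward Ricci flow after the
change of variables dt = √((r+m)/(r-m)) dr. -/
theorem taub_nut_backward_ricci_flow (m : ℝ) (hm : 0 < m) (a b c : ℝ → ℝ)
    (hadef : ∀ r, a r = Real.sqrt (r ^ 2 - m ^ 2))
    (hbdef : ∀ r, b r = Real.sqrt (r ^ 2 - m ^ 2))
    (hcdef : ∀ r, c r = 2 * m * Real.sqrt ((r - m) / (r + m))) :
    ∀ r, m < r →
      HasDerivAt a (Real.sqrt ((r + m) / (r - m)) *
        (((a r) ^ 2 - (b r - c r) ^ 2) / (b r * c r) * (1 / 2))) r ∧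
      HasDerivAt b (Real.sqrt ((r + m) / (r - m)) *
        (((b r) ^ 2 - (c r - a r) ^ 2) / (c r * a r) * (1 / 2))) r ∧
      HasDerivAt c (Real.sqrt ((r + m) / (r - m)) *
        (((c r) ^ 2 - (a r - b r) ^ 2) / (a r * b r) * (1 / 2))) r := by
  have ha : a = fun r => Real.sqrt (r ^ 2 - m ^ 2) := funext hadef
  have hb : b = fun r => Real.sqrt (r ^ 2 - m ^ 2) := funext hbdef
  have hc : c = fun r => 2 * m * Real.sqrt ((r - m) / (r + m)) := funext hcdef
  subst ha hb hc
  intro r hr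
  have hrm : 0 < r - m := sub_pos.2 hr
  have hrp : 0 < r + m := by linarith
  obtain ⟨s, hs0, hsq⟩ : ∃ s : ℝ, 0 < s ∧ s ^ 2 = r - m :=
    ⟨Real.sqrt (r - m), Real.sqrt_pos.2 hrm, Real.sq_sqrt hrm.le⟩
  obtain ⟨t, ht0, htq⟩ : ∃ t : ℝ, 0 < t ∧ t ^ 2 = r + m :=
    ⟨Real.sqrt (r + m), Real.sqrt_pos.2 hrp, Real.sq_sqrt hrp.le⟩
  have hst : Real.sqrt (r ^ 2 - m ^ 2) = s * t := by
    rw [show r ^ 2 - m ^ 2 = (r - m) * (r + m) by ring, Real.sqrt_mul hrm.le,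
      ← hsq, ← htq, Real.sqrt_sq hs0.le, Real.sqrt_sq ht0.le]
  have hdiv : Real.sqrt ((r - m) / (r + m)) = s / t := by
    rw [Real.sqrt_div hrm.le, ← hsq, ← htq, Real.sqrt_sq hs0.le, Real.sqrt_sq ht0.le]
  have hdiv2 : Real.sqrt ((r + m) / (r - m)) = t / s := by
    rw [Real.sqrt_div hrp.le, ← hsq, ← htq, Real.sqrt_sq hs0.le, Real.sqrt_sq ht0.le]
  have hm' : m = (t ^ 2 - s ^ 2) / 2 := by rw [hsq, htq]; ring
  have hr' : r = (s ^ 2 + t ^ 2) / 2 := by rw [hsq, htq]; ring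
  -- derivative of sqrt(r^2 - m^2)
  have h1 : HasDerivAt (fun r : ℝ => r ^ 2 - m ^ 2) (2 * r) r := by
    simpa using (hasDerivAt_pow 2 r).sub_const (m ^ 2)
  have h2 : HasDerivAt (fun r : ℝ => Real.sqrt (r ^ 2 - m ^ 2))
      (1 / (2 * Real.sqrt (r ^ 2 - m ^ 2)) * (2 * r)) r :=
    (Real.hasDerivAt_sqrt (by nlinarith)).comp r h1
  -- derivative of sqrt((r-m)/(r+m))
  have h3 : HasDerivAt (fun r : ℝ => (r - m) / (r + m))
      ((1 * (r + m) - (r - m) * 1) / (r + m) ^ 2) r :=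
    ((hasDerivAt_id r).sub_const m).div ((hasDerivAt_id r).add_const m) hrp.ne'
  have h4 : HasDerivAt (fun r : ℝ => 2 * m * Real.sqrt ((r - m) / (r + m)))
      (2 * m * (1 / (2 * Real.sqrt ((r - m) / (r + m))) *
        ((1 * (r + m) - (r - m) * 1) / (r + m) ^ 2))) r :=
    (((Real.hasDerivAt_sqrt (ne_of_gt (div_pos hrm hrp))).comp r h3).const_mul (2 * m))
  refine ⟨h2.congr_deriv ?_, h2.congr_deriv ?_, h4.congr_deriv ?_⟩ <;>
  · have hts : t ^ 2 - s ^ 2 ≠ 0 := by nlinarith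
    simp only [hst, hdiv, hdiv2]
    rw [hm', hr']
    field_simp
    ring_nf
    try (field_simp; ring)
end

section
/- Let a, b, c : ℝ → ℝ be positive functions satisfying the SL(2,ℝ) Ricci flow ODE a' = ((b + c)² - a²)/(2bc), b' = ((c + a)² - b²)/(2ca), c' = ((a - b)² - c²)/(2ab). Then the Ricci component R₂₂ = -b(b'ca)'/(ca) - ((a² + c²)² - b⁴)/(2a²c²) of the Riemannian cohomogeneity-one metric dt² + a²(θ¹)² + b²(θ²)² + c²(θ³)² is not identically zero; in particular the metric is not Ricci-flat. -/
/-- Along the SL(2,ℝ) Ricci flow, the Ricci component R₂₂ of the Riemannian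
cohomogeneity-one metric is not identically zero. -/
theorem sl2_not_ricci_flat (a b c : ℝ → ℝ)
    (hapos : ∀ t, 0 < a t) (hbpos : ∀ t, 0 < b t) (hcpos : ∀ t, 0 < c t)
    (ha : Differentiable ℝ a) (hb : Differentiable ℝ b) (hc : Differentiable ℝ c)
    (hda : ∀ t, deriv a t = ((b t + c t) ^ 2 - (a t) ^ 2) / (2 * b t * c t))
    (hdb : ∀ t, deriv b t = ((c t + a t) ^ 2 - (b t) ^ 2) / (2 * c t * a t))
    (hdc : ∀ t, deriv c t = ((a t - b t) ^ 2 - (c t) ^ 2) / (2 * a t * b t)) :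
    ¬ (∀ t, -(b t * deriv (fun s => deriv b s * c s * a s) t / (c t * a t)) -
        (((a t) ^ 2 + (c t) ^ 2) ^ 2 - (b t) ^ 4) / (2 * (a t) ^ 2 * (c t) ^ 2) = 0) := by
  intro h
  have h0 := h 0
  -- the inner function equals ((c+a)^2 - b^2)/2 everywhere
  have hfun : (fun s => deriv b s * c s * a s)
      = (fun s => ((c s + a s) ^ 2 - (b s) ^ 2) / 2) := by
    funext s
    rw [hdb s]
    have hcs := (hcpos s).ne'
    have has := (hapos s).ne'
    field_simp
  have hg : HasDerivAt (fun s => ((c s + a s) ^ 2 - (b s) ^ 2) / 2)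
      (((2 : ℕ) * (c 0 + a 0) ^ 1 * (deriv c 0 + deriv a 0)
        - (2 : ℕ) * (b 0) ^ 1 * deriv b 0) / 2) 0 := by
    exact ((((hc 0).hasDerivAt.add (ha 0).hasDerivAt).pow 2).sub
      ((hb 0).hasDerivAt.pow 2)).div_const 2
  have hderiv : deriv (fun s => deriv b s * c s * a s) 0
      = ((2 : ℕ) * (c 0 + a 0) ^ 1 * (deriv c 0 + deriv a 0)
        - (2 : ℕ) * (b 0) ^ 1 * deriv b 0) / 2 := by
    rw [hfun]; exact hg.deriv
  have hA' := (hapos 0).ne'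
  have hB' := (hbpos 0).ne'
  have hC' := (hcpos 0).ne'
  have key : -(b 0 * deriv (fun s => deriv b s * c s * a s) 0 / (c 0 * a 0)) -
      (((a 0) ^ 2 + (c 0) ^ 2) ^ 2 - (b 0) ^ 4) / (2 * (a 0) ^ 2 * (c 0) ^ 2)
      = -2 := by
    rw [hderiv, hda 0, hdb 0, hdc 0]
    push_cast
    field_simp
    ring
  rw [key] at h0
  norm_num at h0
end
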